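/- arXiv:2003.11112 — 3 statements merged into one kernel-verified Lean document; each statement's English description precedes it below -/
import Mathlib

section
/- For every 1 ≤ k ≤ n−1 and every λ ∈ Γ_{k+1}, the trace of the derivative of Q_k satisfies (n−k)/(k+1) ≤ ∑_{i=1}^n (∂Q_k/∂λ_i)(λ) ≤ n−k. -/
/-
Write `S_m(λ | i)` (`eSErase m i λ`) for the elementary symmetric polynomial of the entries other
than `λ_i`. Since `∂S_m/∂λ_i = S_{m-1}(λ | i)` and `∑_i S_m(λ | i) = (n - m) S_m(λ)` (compare the
coefficients of `p'` for `p = ∏ (X + λ_i)`), the trace of `DQ_k` is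
`((n - k) S_k² - (n - k + 1) S_{k-1} S_{k+1}) / S_k²`. On `Γ_{k+1}` the product `S_{k-1} S_{k+1}` is
positive, which gives the upper bound, and Newton's inequality
`(k + 1)(n - k + 1) S_{k-1} S_{k+1} ≤ k (n - k) S_k²` gives the lower bound.

Newton's inequality is proved for multisets of reals by induction on the size: the negatives of
the roots of `p'` are real by Rolle's theorem, and their elementary symmetric functions are those
of the original multiset rescaled by `(n - m) / n`, so the inequality for these `n - 1` numbers
yields the inequality for the original `n`. In the base case `n = k + 1`, with
`y_a = ∏_{b ≠ a} b`, one has `S_k = ∑ y` and `2 S_{k-1} S_{k+1} = (∑ y)² - ∑ y²`, so the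
inequality is Cauchy–Schwarz for `y`.
-/

open Finset

/-- `eS k f` is the elementary symmetric polynomial `S_k` of degree `k` in the entries of the
tuple `f : ι → ℝ` (so `eS 0 f = 1` and `eS k f = 0` for `k > card ι`). -/
noncomputable def eS {ι : Type*} [DecidableEq ι] [Fintype ι] (k : ℕ) (f : ι → ℝ) : ℝ :=
  ∑ t ∈ Finset.univ.powersetCard k, ∏ i ∈ t, f i

/-- `Q k f = S_{k+1}(f) / S_k(f)`. -/
noncomputable def Q {ι : Type*} [DecidableEq ι] [Fintype ι] (k : ℕ) (f : ι → ℝ) : ℝ :=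
  eS (k + 1) f / eS k f

/-- `pdQ k i f` is the `i`-th partial derivative `∂Q_k/∂λ_i` evaluated at `f`. -/
noncomputable def pdQ {n : ℕ} (k : ℕ) (i : Fin n) (f : Fin n → ℝ) : ℝ :=
  deriv (fun s : ℝ => Q k (f + s • (Pi.single i 1 : Fin n → ℝ))) 0

/-- The Garding cone `Γ_m = {λ ∈ ℝⁿ : S_l(λ) > 0 for l = 1,…,m}`. -/
def Gamma (n m : ℕ) : Set (Fin n → ℝ) :=
  {lam | ∀ l : ℕ, 1 ≤ l → l ≤ m → 0 < eS l lam}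

namespace Multiset

open Polynomial

section CommRing

variable {R : Type*} [CommRing R]

theorem esymm_cons_succ (a : R) (s : Multiset R) (m : ℕ) :
    (a ::ₘ s).esymm (m + 1) = s.esymm (m + 1) + a * s.esymm m := by
  simp only [esymm, powersetCard_cons, map_add, sum_add, map_map, Function.comp_def, prod_cons,
    sum_map_mul_left]

theorem esymm_zero (s : Multiset R) : s.esymm 0 = 1 := by
  simp [esymm]

theorem esymm_card (s : Multiset R) : s.esymm (card s) = s.prod := by
  simp [esymm, powersetCard_self]

theorem prod_X_add_C_eq_prod_X_sub_C_neg (s : Multiset R) :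
    (s.map fun r => X + C r).prod = ((s.map Neg.neg).map fun r => X - C r).prod := by
  simp [map_map, sub_eq_add_neg]

theorem coeff_derivative_prod_X_add_C (s : Multiset R) {m : ℕ} (hm : m < card s) :
    (derivative (s.map fun r => X + C r).prod).coeff (card s - 1 - m)
      = ((card s - m : ℕ) : R) * s.esymm m := by
  rw [coeff_derivative, show card s - 1 - m + 1 = card s - m by omega,
    prod_X_add_C_coeff s (Nat.sub_le _ _), Nat.sub_sub_self hm.le, mul_comm, ← Nat.cast_add_one,
    show card s - 1 - m + 1 = card s - m by omega]

theorem sum_map_esymm_erase [DecidableEq R] (s : Multiset R) {m : ℕ} (hm : m < card s) :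
    (s.map fun a => (s.erase a).esymm m).sum = ((card s - m : ℕ) : R) * s.esymm m := by
  rw [← coeff_derivative_prod_X_add_C s hm, derivative_prod]
  simp only [derivative_X_add_C, mul_one]
  rw [← lcoeff_apply, map_multiset_sum, map_map]
  refine congrArg sum (map_congr rfl fun a ha => ?_)
  have hcard : card (s.erase a) = card s - 1 := card_erase_of_mem ha
  rw [Function.comp_apply, lcoeff_apply, prod_X_add_C_coeff _ (by omega), hcard]
  congr 1
  omega

theorem esymm_eq_sum_map_prod_erase [DecidableEq R] (s : Multiset R) {m : ℕ}
    (hs : card s = m + 1) : s.esymm m = (s.map fun a => (s.erase a).prod).sum := by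
  have h := sum_map_esymm_erase s (m := m) (by omega)
  rw [hs, Nat.add_sub_cancel_left, Nat.cast_one, one_mul] at h
  rw [← h]
  refine congrArg sum (map_congr rfl fun a ha => ?_)
  have hcard : card (s.erase a) = m := by rw [card_erase_of_mem ha, hs]; rfl
  rw [← hcard, esymm_card]

theorem two_mul_esymm_mul_esymm [DecidableEq R] (s : Multiset R) {m : ℕ} (hs : card s = m + 2) :
    2 * (s.esymm (m + 2) * s.esymm m)
      = (s.map fun a => (s.erase a).prod).sum ^ 2 - (s.map fun a => (s.erase a).prod ^ 2).sum := by
  have hpair : ∀ a ∈ s, s.prod * (s.erase a).esymm m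
      = (s.erase a).prod * ((s.map fun b => (s.erase b).prod).sum - (s.erase a).prod) := by
    intro a ha
    rw [esymm_eq_sum_map_prod_erase _ (by rw [card_erase_of_mem ha, hs]; rfl), ← sum_map_mul_left,
      ← sum_map_erase ha, add_sub_cancel_left, ← sum_map_mul_left]
    refine congrArg sum (map_congr rfl fun b hb => ?_)
    have hab : a ∈ s.erase b := by
      rcases eq_or_ne a b with rfl | hab
      · exact hb
      · exact (mem_erase_of_ne hab).mpr ha
    rw [← prod_erase ha, ← prod_erase hab, erase_comm]
    ring
  have htwo : ((card s - m : ℕ) : R) = 2 := by rw [hs, Nat.add_sub_cancel_left]; rfl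
  have hprod : s.esymm (m + 2) = s.prod := hs ▸ esymm_card s
  rw [← htwo, mul_left_comm, ← sum_map_esymm_erase s (by omega), hprod, ← sum_map_mul_left,
    map_congr rfl hpair]
  simp only [mul_sub, sum_map_sub, sum_map_mul_right, sq]

end CommRing

theorem sq_sum_map_le_card_mul_sum_map_sq {α : Type*} (s : Multiset α) (f : α → ℝ) :
    (s.map f).sum ^ 2 ≤ card s * (s.map fun a => f a ^ 2).sum := by
  have hs : s = Finset.univ.val.map s.toList.get := by
    rw [Fin.univ_val_map, List.ofFn_get, coe_toList]
  rw [hs, map_map, map_map, card_map]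
  exact sq_sum_le_card_mul_sum_sq (s := Finset.univ) (f := f ∘ s.toList.get)

theorem esymm_mul_esymm_le_of_card_eq (s : Multiset ℝ) {k : ℕ} (hs : card s = k + 2) :
    2 * ((k : ℝ) + 2) * (s.esymm k * s.esymm (k + 2)) ≤ ((k : ℝ) + 1) * s.esymm (k + 1) ^ 2 := by
  classical
  have hcs := sq_sum_map_le_card_mul_sum_map_sq s fun a => (s.erase a).prod
  have hsq := two_mul_esymm_mul_esymm s hs
  rw [esymm_eq_sum_map_prod_erase s hs]
  rw [hs] at hcs
  push_cast at hcs
  linear_combination ((k : ℝ) + 2) * hsq + hcs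

theorem exists_esymm_eq_of_derivative (s : Multiset ℝ) {N : ℕ} (hs : card s = N + 1) :
    ∃ t : Multiset ℝ, card t = N ∧
      ∀ m ≤ N, ((N : ℝ) + 1) * t.esymm m = ((N : ℝ) + 1 - m) * s.esymm m := by
  set p := (s.map fun r => X + C r).prod with hp
  have hp_deg : p.natDegree = N + 1 := by
    rw [hp, prod_X_add_C_eq_prod_X_sub_C_neg, natDegree_multiset_prod_X_sub_C_eq_card, card_map, hs]
  have hp_roots : card p.roots = N + 1 := by
    rw [hp, prod_X_add_C_eq_prod_X_sub_C_neg, roots_multiset_prod_X_sub_C, card_map, hs]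
  have hcoeff : ∀ m ≤ N, (derivative p).coeff (N - m) = ((N : ℝ) + 1 - m) * s.esymm m := by
    intro m hm
    have h := coeff_derivative_prod_X_add_C s (m := m) (by omega)
    rwa [hs, Nat.add_sub_cancel, Nat.cast_sub (by omega), Nat.cast_add_one] at h
  have hlead : (derivative p).coeff N = N + 1 := by simpa [esymm_zero] using hcoeff 0 N.zero_le
  have hdeg : (derivative p).natDegree = N :=
    le_antisymm ((natDegree_derivative_le p).trans_eq (by rw [hp_deg, Nat.add_sub_cancel]))
      (le_natDegree_of_ne_zero (by rw [hlead]; positivity))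
  have hroots : card (derivative p).roots = N :=
    le_antisymm (hdeg ▸ card_roots' _) (by have := card_roots_le_derivative p; omega)
  set t := (derivative p).roots.map Neg.neg with ht
  have hsplit : derivative p = C ((N : ℝ) + 1) * (t.map fun r => X + C r).prod := by
    have hprod :
        (t.map fun r => X + C r).prod = ((derivative p).roots.map fun r => X - C r).prod := by
      simp [ht, map_map, sub_eq_add_neg]
    rw [hprod, ← hlead, ← hdeg]
    exact (C_leadingCoeff_mul_prod_multiset_X_sub_C (hroots.trans hdeg.symm)).symm
  have htcard : card t = N := by rw [ht, card_map, hroots]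
  refine ⟨t, htcard, fun m hm => ?_⟩
  rw [← hcoeff m hm, hsplit, coeff_C_mul, prod_X_add_C_coeff t (by omega), htcard,
    Nat.sub_sub_self hm]

theorem esymm_mul_esymm_le (s : Multiset ℝ) {k : ℕ} (hk : k + 2 ≤ card s) :
    ((k : ℝ) + 2) * (card s - k) * (s.esymm k * s.esymm (k + 2))
      ≤ ((k : ℝ) + 1) * (card s - k - 1) * s.esymm (k + 1) ^ 2 := by
  obtain ⟨N, hN⟩ : ∃ N, card s = N := ⟨_, rfl⟩
  rw [hN] at hk ⊢
  induction N, hk using Nat.le_induction generalizing s with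
  | base =>
    have h := esymm_mul_esymm_le_of_card_eq s hN
    push_cast
    linear_combination h
  | succ N hkN ih =>
    obtain ⟨t, ht, hrel⟩ := exists_esymm_eq_of_derivative s hN
    have hk0 := hrel k (by omega)
    have hk1 := hrel (k + 1) (by omega)
    have hk2 := hrel (k + 2) (by omega)
    push_cast at hk0 hk1 hk2 ⊢
    have hmul : ((N : ℝ) + 1) ^ 2 * (t.esymm k * t.esymm (k + 2))
        = ((N : ℝ) + 1 - k) * (N - k - 1) * (s.esymm k * s.esymm (k + 2)) := by
      linear_combination
        ((N + 1 : ℝ) * t.esymm (k + 2)) * hk0 + ((N + 1 - k : ℝ) * s.esymm k) * hk2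
    have hsq : ((N : ℝ) + 1) ^ 2 * t.esymm (k + 1) ^ 2
        = ((N : ℝ) - k) ^ 2 * s.esymm (k + 1) ^ 2 := by
      linear_combination ((N + 1 : ℝ) * t.esymm (k + 1) + (N - k : ℝ) * s.esymm (k + 1)) * hk1
    have hNk : (k : ℝ) + 2 ≤ N := by exact_mod_cast hkN
    have hpos : 0 < ((N : ℝ) - k) * (N - k - 1) := mul_pos (by linarith) (by linarith)
    refine le_of_mul_le_mul_left ?_ hpos
    have h := mul_le_mul_of_nonneg_left (ih t ht) (sq_nonneg ((N : ℝ) + 1))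
    linear_combination h - ((k : ℝ) + 2) * (N - k) * hmul + ((k : ℝ) + 1) * (N - k - 1) * hsq

end Multiset

section ElementarySymmetric

variable {ι : Type*} [DecidableEq ι] [Fintype ι]

theorem eS_eq_esymm (k : ℕ) (f : ι → ℝ) : eS k f = (univ.val.map f).esymm k := by
  rw [eS, Finset.esymm_map_val]

theorem eS_zero (f : ι → ℝ) : eS 0 f = 1 := by
  rw [eS_eq_esymm, Multiset.esymm_zero]

noncomputable def eSErase (m : ℕ) (i : ι) (f : ι → ℝ) : ℝ :=
  ((univ.erase i).val.map f).esymm m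

theorem univ_val_map_eq_cons {f g : ι → ℝ} (i : ι) (hfg : ∀ j ≠ i, g j = f j) :
    univ.val.map g = g i ::ₘ (univ.erase i).val.map f := by
  conv_lhs => rw [← Multiset.cons_erase (mem_univ_val i), ← erase_val]
  rw [Multiset.map_cons]
  exact congrArg _ (Multiset.map_congr rfl fun j hj => hfg j (ne_of_mem_erase hj))

theorem eS_succ_eq_eSErase_add {f g : ι → ℝ} (m : ℕ) (i : ι) (hfg : ∀ j ≠ i, g j = f j) :
    eS (m + 1) g = eSErase (m + 1) i f + g i * eSErase m i f := by
  rw [eS_eq_esymm, univ_val_map_eq_cons i hfg, Multiset.esymm_cons_succ, eSErase, eSErase]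

theorem hasDerivAt_eS_add_smul_single (m : ℕ) (f : ι → ℝ) (i : ι) :
    HasDerivAt (fun s : ℝ => eS (m + 1) (f + s • Pi.single i 1)) (eSErase m i f) 0 := by
  have hline : ∀ s : ℝ, eS (m + 1) (f + s • Pi.single i 1)
      = eSErase (m + 1) i f + (f i + s) * eSErase m i f := fun s => by
    rw [eS_succ_eq_eSErase_add (f := f) m i fun j hj => by simp [hj]]
    simp
  simp_rw [hline]
  simpa using (((hasDerivAt_id (0 : ℝ)).const_add (f i)).mul_const (eSErase m i f)).const_add
    (eSErase (m + 1) i f)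

theorem sum_eSErase (f : ι → ℝ) {m : ℕ} (hm : m < Fintype.card ι) :
    ∑ i, eSErase m i f = ((Fintype.card ι : ℝ) - m) * eS m f := by
  have h := Multiset.sum_map_esymm_erase (univ.val.map f) (m := m) (by simpa using hm)
  rw [Multiset.map_map, Multiset.card_map, card_val, card_univ, Nat.cast_sub hm.le] at h
  rw [eS_eq_esymm, ← h, sum_eq_multiset_sum]
  refine congrArg Multiset.sum (Multiset.map_congr rfl fun i _ => ?_)
  rw [eSErase, erase_val, Function.comp_apply, Multiset.map_erase_of_mem _ _ (mem_univ_val i)]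

theorem eS_mul_eS_le (f : ι → ℝ) {k : ℕ} (hk : k + 2 ≤ Fintype.card ι) :
    ((k : ℝ) + 2) * (Fintype.card ι - k) * (eS k f * eS (k + 2) f)
      ≤ ((k : ℝ) + 1) * (Fintype.card ι - k - 1) * eS (k + 1) f ^ 2 := by
  simpa only [eS_eq_esymm, Multiset.card_map, card_val, card_univ]
    using Multiset.esymm_mul_esymm_le (univ.val.map f) (by simpa using hk)

end ElementarySymmetric

theorem eS_pos_of_mem_Gamma {n m l : ℕ} {f : Fin n → ℝ} (hf : f ∈ Gamma n m) (hl : l ≤ m) :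
    0 < eS l f := by
  rcases l with _ | l
  · rw [eS_zero]; exact one_pos
  · exact hf (l + 1) l.succ_pos hl

theorem pdQ_succ_eq {n : ℕ} (k : ℕ) (i : Fin n) (f : Fin n → ℝ) (hf : eS (k + 1) f ≠ 0) :
    pdQ (k + 1) i f
      = (eSErase (k + 1) i f * eS (k + 1) f - eS (k + 2) f * eSErase k i f) / eS (k + 1) f ^ 2 := by
  have h := (hasDerivAt_eS_add_smul_single (k + 1) f i).div (hasDerivAt_eS_add_smul_single k f i)
    (by simpa using hf)
  simp only [zero_smul, add_zero] at h
  exact h.deriv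

theorem sum_pdQ_succ_eq {n : ℕ} (k : ℕ) (f : Fin n → ℝ) (hk : k + 1 < n) (hf : eS (k + 1) f ≠ 0) :
    ∑ i, pdQ (k + 1) i f
      = (((n : ℝ) - k - 1) * eS (k + 1) f ^ 2 - ((n : ℝ) - k) * (eS k f * eS (k + 2) f))
        / eS (k + 1) f ^ 2 := by
  simp_rw [pdQ_succ_eq k _ f hf]
  rw [← sum_div, sum_sub_distrib, ← sum_mul, ← mul_sum, sum_eSErase f (by simpa using hk),
    sum_eSErase f (by simp; omega), Fintype.card_fin]
  congr 1
  push_cast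
  ring

/-- For every `1 ≤ k ≤ n−1` and every `λ ∈ Γ_{k+1}`, the trace of the derivative of `Q_k`
satisfies `(n−k)/(k+1) ≤ ∑_{i=1}^n (∂Q_k/∂λ_i)(λ) ≤ n−k`. -/
theorem trace_pdQ_bounds (n k : ℕ) (hk1 : 1 ≤ k) (hk2 : k + 1 ≤ n)
    (lam : Fin n → ℝ) (hlam : lam ∈ Gamma n (k + 1)) :
    ((n : ℝ) - k) / ((k : ℝ) + 1) ≤ ∑ i, pdQ k i lam
    ∧ ∑ i, pdQ k i lam ≤ (n : ℝ) - k := by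
  obtain ⟨j, rfl⟩ : ∃ j, k = j + 1 := ⟨k - 1, by omega⟩
  have hS0 : 0 < eS j lam := eS_pos_of_mem_Gamma hlam (by omega)
  have hS1 : 0 < eS (j + 1) lam := eS_pos_of_mem_Gamma hlam (by omega)
  have hS2 : 0 < eS (j + 2) lam := eS_pos_of_mem_Gamma hlam le_rfl
  have hnewton := eS_mul_eS_le lam (k := j) (by simp; omega)
  rw [Fintype.card_fin] at hnewton
  have hjn : (0 : ℝ) < n - j := by
    have : (j : ℝ) + 2 ≤ n := by exact_mod_cast hk2
    linarith
  rw [sum_pdQ_succ_eq j lam (by omega) hS1.ne']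
  push_cast
  constructor
  · rw [div_le_div_iff₀ (by positivity) (by positivity)]
    linear_combination hnewton
  · rw [div_le_iff₀ (by positivity)]
    linear_combination mul_pos hjn (mul_pos hS0 hS2)
end

section
/- Let n ≥ 2 and let A be an n×n real symmetric arrowhead matrix (A_{ij} = 0 for all 2 ≤ i ≠ j ≤ n). Then for every 2 ≤ i ≤ n and every integer l ≥ 0, S_l(A) = S_l(A|i) + A_{ii} S_{l−1}(A|i) − A_{1i}² S_{l−2}(A|1i), where A|i (resp. A|1i) denotes the principal submatrix of A obtained by deleting row and column i (resp. rows and columns 1 and i). -/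
/-!
The generating polynomial `det (1 + X • A) = ∑ l, S_l(A) X^l` is expanded along row `i`, which
in an arrowhead matrix meets only the diagonal and the hub `1`:
`det (1 + X • A) = (1 + A_ii X) det (1 + X • A|i) - A_1i² X² det (1 + X • A|1i)`.
Comparing the coefficients of `X^l` gives the recurrence.
-/

open Finset

/-- `mS l B` is the sum of all `l×l` principal minors of the matrix `B`, so that
`det (t•1 + B) = ∑ l, mS l B * t^(n-l)`; in particular `mS 0 B = 1` and `mS l B = 0` for
`l > card ι`. -/
noncomputable def mS {ι : Type*} [DecidableEq ι] [Fintype ι] (l : ℕ) (B : Matrix ι ι ℝ) : ℝ :=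
  ∑ t ∈ Finset.univ.powersetCard l,
    Matrix.det (Matrix.of fun i j : {x : ι // x ∈ t} => B i.1 j.1)

/-- `mSZ l B` is `mS l B` for `l ≥ 0` and `0` for negative `l`. -/
noncomputable def mSZ {ι : Type*} [DecidableEq ι] [Fintype ι] (l : ℤ) (B : Matrix ι ι ℝ) : ℝ :=
  if 0 ≤ l then mS l.toNat B else 0

namespace Matrix

variable {κ R : Type*} [Fintype κ] [DecidableEq κ] [CommRing R]

theorem det_eq_mul_det_toSquareBlockProp_ne_of_row {M : Matrix κ κ R} {i : κ}
    (h : ∀ j, j ≠ i → M i j = 0) :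
    M.det = M i i * (M.toSquareBlockProp (· ≠ i)).det := by
  rw [twoBlockTriangular_det' M (· = i) fun a ha b hb => ha ▸ h b hb]
  congr 1
  convert det_eq_elem_of_subsingleton (M.toSquareBlockProp (· = i)) ⟨i, rfl⟩
  rfl

theorem det_eq_mul_det_toSquareBlockProp_ne_of_col {M : Matrix κ κ R} {i : κ}
    (h : ∀ j, j ≠ i → M j i = 0) :
    M.det = M i i * (M.toSquareBlockProp (· ≠ i)).det := by
  rw [← det_transpose, det_eq_mul_det_toSquareBlockProp_ne_of_row (M := Mᵀ) h]
  exact congrArg _ (det_transpose _)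

theorem det_updateRow_single_self (M : Matrix κ κ R) (i : κ) :
    (M.updateRow i (Pi.single i 1)).det = (M.toSquareBlockProp (· ≠ i)).det := by
  rw [det_eq_mul_det_toSquareBlockProp_ne_of_row (M := M.updateRow i (Pi.single i 1))
    fun j hj => by rw [updateRow_self, Pi.single_eq_of_ne hj]]
  simp only [updateRow_self, Pi.single_eq_same, one_mul]
  congr 1
  ext a b
  simp only [toSquareBlockProp_def, of_apply, updateRow_ne a.2]

theorem det_toSquareBlockProp_ne_toSquareBlockProp_ne (M : Matrix κ κ R) {z i : κ}
    (hiz : i ≠ z) :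
    ((M.toSquareBlockProp (· ≠ z)).toSquareBlockProp (· ≠ ⟨i, hiz⟩)).det
      = (M.toSquareBlockProp fun j => j ≠ z ∧ j ≠ i).det := by
  let e : {j // j ≠ z ∧ j ≠ i} ≃ {j : {j // j ≠ z} // j ≠ ⟨i, hiz⟩} :=
    { toFun := fun j => ⟨⟨j, j.2.1⟩, fun h => j.2.2 (congrArg Subtype.val h)⟩
      invFun := fun j => ⟨j, j.1.2, fun h => j.2 (Subtype.ext h)⟩ }
  rw [← det_submatrix_equiv_self e]
  rfl

theorem det_eq_of_row_col_eq_zero {M : Matrix κ κ R} {z i : κ} (hzi : z ≠ i)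
    (hrow : ∀ j, j ≠ z → j ≠ i → M i j = 0) (hcol : ∀ j, j ≠ z → j ≠ i → M j i = 0) :
    M.det = M i i * (M.toSquareBlockProp (· ≠ i)).det
      - M i z * M z i * (M.toSquareBlockProp fun j => j ≠ z ∧ j ≠ i).det := by
  have hcof : adjugate M z i = - M z i * (M.toSquareBlockProp fun j => j ≠ z ∧ j ≠ i).det := by
    -- after swapping rows `i` and `z`, row `z` is a unit vector and column `i` lives on `i`
    set Q := (M.updateRow i (Pi.single z 1)).submatrix (Equiv.swap i z) id
    have hQ : adjugate M z i = - Q.det := by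
      rw [det_permute, Equiv.Perm.sign_swap hzi.symm, adjugate_apply]
      simp
    have hQz : ∀ j, j ≠ z → Q z j = 0 := fun j hj => by
      simp [Q, Equiv.swap_apply_right, Pi.single_eq_of_ne hj]
    have hQi : ∀ j, j ≠ ⟨i, hzi.symm⟩ → Q.toSquareBlockProp (· ≠ z) j ⟨i, hzi.symm⟩ = 0 := by
      intro j hj
      have hji : j.1 ≠ i := fun h => hj (Subtype.ext h)
      simp only [Q, toSquareBlockProp_def, of_apply, submatrix_apply, id,
        Equiv.swap_apply_of_ne_of_ne hji j.2, updateRow_ne hji, hcol j j.2 hji]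
    have hQM : Q.toSquareBlockProp (fun j => j ≠ z ∧ j ≠ i)
        = M.toSquareBlockProp fun j => j ≠ z ∧ j ≠ i := by
      ext a b
      simp only [Q, toSquareBlockProp_def, of_apply, submatrix_apply, id,
        Equiv.swap_apply_of_ne_of_ne a.2.2 a.2.1, updateRow_ne a.2.2]
    rw [hQ, det_eq_mul_det_toSquareBlockProp_ne_of_row hQz,
      det_eq_mul_det_toSquareBlockProp_ne_of_col hQi,
      det_toSquareBlockProp_ne_toSquareBlockProp_ne, hQM]
    simp only [Q, toSquareBlockProp_def, of_apply, submatrix_apply, id, Equiv.swap_apply_left,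
      Equiv.swap_apply_right, updateRow_self, updateRow_ne hzi, Pi.single_eq_same]
    ring
  rw [det_eq_sum_mul_adjugate_row M i, Fintype.sum_eq_add i z hzi.symm fun j hj => ?_,
    adjugate_apply, det_updateRow_single_self, hcof]
  · ring
  · rw [hrow j hj.2 hj.1, zero_mul]

end Matrix

open Polynomial

noncomputable def mSPoly {ι : Type*} [DecidableEq ι] [Fintype ι] (B : Matrix ι ι ℝ) : ℝ[X] :=
  (1 + (X : ℝ[X]) • B.map C).det

section

variable {ι : Type*} [DecidableEq ι] [Fintype ι]

theorem coeff_mSPoly (B : Matrix ι ι ℝ) (l : ℕ) : (mSPoly B).coeff l = mS l B :=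
  Matrix.coeff_det_one_add_X_smul_eq_sum_minors B l

theorem mSZ_natCast (B : Matrix ι ι ℝ) (l : ℕ) : mSZ (l : ℤ) B = mS l B := by
  simp [mSZ]

theorem mSZ_sub_eq_coeff (B : Matrix ι ι ℝ) (l n : ℕ) :
    mSZ ((l : ℤ) - n) B = (X ^ n * mSPoly B).coeff l := by
  rw [coeff_X_pow_mul', mSZ]
  rcases le_or_gt n l with h | h
  · rw [if_pos (by omega), if_pos h, coeff_mSPoly, show ((l : ℤ) - n).toNat = l - n by omega]
  · rw [if_neg (by omega), if_neg (by omega)]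

theorem mSPoly_of_row_col_eq_zero {A : Matrix ι ι ℝ} {z i : ι} (hzi : z ≠ i)
    (hrow : ∀ j, j ≠ z → j ≠ i → A i j = 0) (hcol : ∀ j, j ≠ z → j ≠ i → A j i = 0) :
    mSPoly A = mSPoly (A.toSquareBlockProp (· ≠ i))
      + C (A i i) * (X * mSPoly (A.toSquareBlockProp (· ≠ i)))
      - C (A i z * A z i) * (X ^ 2 * mSPoly (A.toSquareBlockProp fun j => j ≠ z ∧ j ≠ i)) := by
  have hblock : ∀ p : ι → Prop, (1 + (X : ℝ[X]) • A.map C).toSquareBlockProp p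
      = 1 + (X : ℝ[X]) • (A.toSquareBlockProp p).map C := fun p => by
    ext a b
    simp [Matrix.toSquareBlockProp_def, Matrix.one_apply, Subtype.ext_iff]
  rw [mSPoly, Matrix.det_eq_of_row_col_eq_zero hzi (fun j hz hi => ?_) (fun j hz hi => ?_),
    hblock, hblock, mSPoly, mSPoly]
  · simp only [Matrix.add_apply, Matrix.one_apply_eq, Matrix.one_apply_ne hzi,
      Matrix.one_apply_ne hzi.symm, Matrix.smul_apply, Matrix.map_apply, smul_eq_mul, zero_add,
      map_mul]
    ring
  · simp [Matrix.one_apply_ne (Ne.symm hi), hrow j hz hi]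
  · simp [Matrix.one_apply_ne hi, hcol j hz hi]

theorem mSZ_of_row_col_eq_zero {A : Matrix ι ι ℝ} {z i : ι} (hzi : z ≠ i)
    (hrow : ∀ j, j ≠ z → j ≠ i → A i j = 0) (hcol : ∀ j, j ≠ z → j ≠ i → A j i = 0) (l : ℕ) :
    mSZ (l : ℤ) A = mSZ (l : ℤ) (A.toSquareBlockProp (· ≠ i))
      + A i i * mSZ ((l : ℤ) - 1) (A.toSquareBlockProp (· ≠ i))
      - A i z * A z i * mSZ ((l : ℤ) - 2) (A.toSquareBlockProp fun j => j ≠ z ∧ j ≠ i) := by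
  have h₁ := mSZ_sub_eq_coeff (A.toSquareBlockProp (· ≠ i)) l 1
  have h₂ := mSZ_sub_eq_coeff (A.toSquareBlockProp fun j => j ≠ z ∧ j ≠ i) l 2
  rw [Nat.cast_one, pow_one] at h₁
  rw [Nat.cast_ofNat] at h₂
  rw [mSZ_natCast, mSZ_natCast, h₁, h₂, ← coeff_mSPoly, ← coeff_mSPoly,
    mSPoly_of_row_col_eq_zero hzi hrow hcol, coeff_sub, coeff_add, coeff_C_mul, coeff_C_mul]

end

/-- Let `A` be an `n×n` (`n = N+2 ≥ 2`) real symmetric arrowhead matrix. Then for every index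
`i ≠ 0` (i.e. `2 ≤ i` in 1-based notation) and every `l ≥ 0`,
`S_l(A) = S_l(A|i) + A_{ii} S_{l−1}(A|i) − A_{1i}² S_{l−2}(A|1i)`, where `A|i` (resp. `A|1i`)
is the principal submatrix of `A` obtained by deleting row and column `i` (resp. rows and
columns `1` and `i`). -/
theorem mS_arrowhead_delete (N : ℕ) (A : Matrix (Fin (N + 2)) (Fin (N + 2)) ℝ)
    (hsymm : A.IsSymm)
    (harrow : ∀ i j : Fin (N + 2), i ≠ 0 → j ≠ 0 → i ≠ j → A i j = 0)
    (i : Fin (N + 2)) (hi : i ≠ 0) (l : ℕ) :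
    mSZ (l : ℤ) A
      = mSZ (l : ℤ) (Matrix.of fun a b : {x : Fin (N + 2) // x ≠ i} => A a.1 b.1)
        + A i i * mSZ ((l : ℤ) - 1) (Matrix.of fun a b : {x : Fin (N + 2) // x ≠ i} => A a.1 b.1)
        - (A 0 i) ^ 2 *
            mSZ ((l : ℤ) - 2)
              (Matrix.of fun a b : {x : Fin (N + 2) // x ≠ 0 ∧ x ≠ i} => A a.1 b.1) := by
  have h := mSZ_of_row_col_eq_zero hi.symm (fun j hj hji => harrow i j hi hj hji.symm)
    (fun j hj hji => harrow j i hj hi hji) l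
  rwa [hsymm.apply 0 i, ← sq] at h
end

section
/- Let n ≥ 2, 0 ≤ k ≤ n−1, and let A be an n×n real symmetric arrowhead matrix with A_{11} < 0 and S_l(A) > 0 for l = 1,…,k+1. Then for every 2 ≤ i ≤ n, (∂Q_k/∂A_{ii})(A) > 0. -/
/-!
The `S_l(B)` are the coefficients of `det (1 + X • B)`, and
`det (1 + X • (A + s • Eᵢᵢ)) = det (1 + X • A) + s X adj (1 + X • A)ᵢᵢ`, so each `S_l` is affine
along `A + s • Eᵢᵢ`. Diagonalising `A = U diag(λ) Uᵀ` gives `S_l(A) = e_l(λ)` and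
`∂S_{l+1}/∂Aᵢᵢ = ∑ⱼ Uᵢⱼ² e_l(λ⁽ʲ⁾)`, where `λ⁽ʲ⁾` omits `λⱼ`. Expanding
`e_l(λ) = e_l(λ⁽ʲ⁾) + λⱼ e_{l-1}(λ⁽ʲ⁾)`, the numerator of `∂Q_k/∂Aᵢᵢ` becomes
`∑ⱼ Uᵢⱼ² (e_k(λ⁽ʲ⁾)² - e_{k-1}(λ⁽ʲ⁾) e_{k+1}(λ⁽ʲ⁾))`. Each bracket is positive by Newton's
inequality, which is strict here because its constant is `< 1` and `e_k(λ), e_{k+1}(λ) > 0`.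
Newton's inequality is reduced by Rolle's theorem to `n = k + 2` numbers, where it is
Cauchy–Schwarz for their reciprocals.
-/

open Finset

/-- `mQ k B = S_{k+1}(B) / S_k(B)`. -/
noncomputable def mQ {ι : Type*} [DecidableEq ι] [Fintype ι] (k : ℕ) (B : Matrix ι ι ℝ) : ℝ :=
  mS (k + 1) B / mS k B

/-- `pdmQ k i j B` is the partial derivative `∂Q_k/∂B_{ij}` of the function
`B ↦ Q_k(B) = S_{k+1}(B)/S_k(B)` of the matrix entries, with respect to the `(i,j)` entry,
evaluated at `B`. -/
noncomputable def pdmQ {ι : Type*} [DecidableEq ι] [Fintype ι] (k : ℕ) (i j : ι)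
    (B : Matrix ι ι ℝ) : ℝ :=
  deriv (fun s : ℝ => mQ k (B + s • Matrix.single i j (1 : ℝ))) 0

open Polynomial Matrix

namespace Multiset

section CommSemiring

variable {R : Type*} [CommSemiring R]

theorem esymm_zero_s11 (m : Multiset R) : m.esymm 0 = 1 := by
  simp [esymm]

theorem esymm_cons (a : R) (m : Multiset R) (l : ℕ) :
    (a ::ₘ m).esymm (l + 1) = m.esymm (l + 1) + a * m.esymm l := by
  simp only [esymm, powersetCard_cons, map_add, sum_add, map_map, Function.comp_def, prod_cons,
    sum_map_mul_left]

theorem esymm_eq_zero_of_card_lt {m : Multiset R} {l : ℕ} (h : card m < l) : m.esymm l = 0 := by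
  simp [esymm, powersetCard_eq_empty _ h]

theorem esymm_one (m : Multiset R) : m.esymm 1 = m.sum := by
  simp [esymm, powersetCard_one, map_map]

theorem esymm_card_s11 (m : Multiset R) : m.esymm (card m) = m.prod := by
  induction m using Multiset.induction with
  | empty => simp [esymm_zero_s11]
  | cons a m ih =>
    rw [card_cons, esymm_cons, esymm_eq_zero_of_card_lt (Nat.lt_succ_self _), ih, prod_cons,
      zero_add]

theorem prod_one_add_X_mul_C_coeff (m : Multiset R) (l : ℕ) :
    (m.map fun a => 1 + X * C a).prod.coeff l = m.esymm l := by
  induction m using Multiset.induction generalizing l with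
  | empty =>
    cases l with
    | zero => simp [esymm_zero_s11]
    | succ l => simp [esymm_eq_zero_of_card_lt (m := (0 : Multiset R)) (Nat.succ_pos l), coeff_one]
  | cons a m ih =>
    rw [map_cons, prod_cons, add_mul, one_mul, mul_assoc]
    cases l with
    | zero => rw [coeff_add, coeff_X_mul_zero, add_zero, ih, esymm_zero_s11, esymm_zero_s11]
    | succ l => rw [coeff_add, coeff_X_mul, coeff_C_mul, ih, ih, esymm_cons]

end CommSemiring

theorem two_mul_esymm_two {R : Type*} [CommRing R] (m : Multiset R) :
    2 * m.esymm 2 = m.sum ^ 2 - (m.map (· ^ 2)).sum := by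
  induction m using Multiset.induction with
  | empty => simp [esymm_eq_zero_of_card_lt (m := (0 : Multiset R)) two_pos]
  | cons a m ih =>
    rw [esymm_cons, esymm_one, sum_cons, map_cons, sum_cons]
    linear_combination ih

theorem esymm_map_inv_mul_prod {K : Type*} [Field K] {m : Multiset K} (h0 : (0 : K) ∉ m)
    {l : ℕ} (hl : l ≤ card m) : (m.map (·⁻¹)).esymm l * m.prod = m.esymm (card m - l) := by
  have hpoly : (m.map fun a => X + C a⁻¹).prod * C m.prod = (m.map fun a => 1 + X * C a).prod := by
    rw [map_multiset_prod, ← prod_map_mul]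
    refine congrArg _ (map_congr rfl fun a ha => ?_)
    rw [add_mul, ← C_mul, inv_mul_cancel₀ (ne_of_mem_of_not_mem ha h0), C_1, add_comm]
  have := congrArg (coeff · (card m - l)) hpoly
  simp only [coeff_mul_C, prod_one_add_X_mul_C_coeff] at this
  rwa [prod_X_add_C_coeff' _ _ (Nat.sub_le _ _), Nat.sub_sub_self hl] at this

theorem sq_sum_le_card_mul_sum_sq (m : Multiset ℝ) :
    m.sum ^ 2 ≤ card m * (m.map (· ^ 2)).sum := by
  classical
  have h := _root_.sq_sum_le_card_mul_sum_sq (s := m.toEnumFinset) (f := Prod.fst)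
  have hsq : (m.toEnumFinset.val.map fun x => x.1 ^ 2) = m.map (· ^ 2) := by
    conv_rhs => rw [← map_toEnumFinset_fst m, map_map]
    rfl
  rwa [card_toEnumFinset, Finset.sum_eq_multiset_sum, Finset.sum_eq_multiset_sum, hsq,
    map_toEnumFinset_fst] at h

theorem esymm_mul_esymm_le_of_card_eq_s11 {K : ℕ} {m : Multiset ℝ} (hm : card m = K + 2) :
    m.esymm K * m.esymm (K + 2) * (2 * (K + 2)) ≤ m.esymm (K + 1) ^ 2 * (K + 1) := by
  by_cases h0 : (0 : ℝ) ∈ m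
  · rw [← hm, esymm_card_s11, prod_eq_zero h0]
    simp only [mul_zero, zero_mul]
    positivity
  -- The reciprocals `y` turn `e_K, e_{K+1}, e_{K+2}` of `m` into `e_2, e_1, e_0` of `y`.
  set y := m.map (·⁻¹)
  have hy : card y = K + 2 := by rw [card_map, hm]
  have e0 : m.esymm (K + 2) = y.esymm 0 * m.prod := by
    rw [esymm_map_inv_mul_prod h0 (Nat.zero_le _), hm, Nat.sub_zero]
  have e1 : m.esymm (K + 1) = y.sum * m.prod := by
    rw [← esymm_one, esymm_map_inv_mul_prod h0 (by omega), hm]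
    rfl
  have e2 : m.esymm K = y.esymm 2 * m.prod := by
    rw [esymm_map_inv_mul_prod h0 (by omega), hm, Nat.add_sub_cancel]
  have hcs := sq_sum_le_card_mul_sum_sq y
  rw [hy, Nat.cast_add, Nat.cast_two] at hcs
  have htwo := two_mul_esymm_two y
  rw [e0, e1, e2, esymm_zero_s11]
  linear_combination mul_le_mul_of_nonneg_right hcs (sq_nonneg m.prod)
    + ((K + 2) * m.prod ^ 2) * htwo

theorem card_roots_derivative_prod_X_sub_C (m : Multiset ℝ) :
    card (derivative (m.map fun a => X - C a).prod).roots = card m - 1 := by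
  set p := (m.map fun a => X - C a).prod
  refine le_antisymm ?_ ?_
  · calc card (derivative p).roots ≤ (derivative p).natDegree := card_roots' _
      _ ≤ p.natDegree - 1 := natDegree_derivative_le p
      _ = card m - 1 := by rw [natDegree_multiset_prod_X_sub_C_eq_card]
  · have := card_roots_le_derivative p
    rw [roots_multiset_prod_X_sub_C] at this
    omega

theorem card_mul_esymm_roots_derivative (m : Multiset ℝ) {l : ℕ} (hl : l < card m) :
    (card m : ℝ) * (derivative (m.map fun a => X - C a).prod).roots.esymm l
      = (card m - l : ℕ) * m.esymm l := by
  set p := (m.map fun a => X - C a).prod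
  set q := derivative p
  set n := card m
  have hq : q.natDegree = n - 1 := by
    have h1 : card q.roots ≤ q.natDegree := card_roots' q
    have h2 : q.natDegree ≤ p.natDegree - 1 := natDegree_derivative_le p
    rw [card_roots_derivative_prod_X_sub_C] at h1
    rw [natDegree_multiset_prod_X_sub_C_eq_card] at h2
    omega
  have hroots : card q.roots = q.natDegree := by rw [hq, card_roots_derivative_prod_X_sub_C]
  have hcoeff : ∀ k < n, q.coeff k = (-1) ^ (n - (k + 1)) * m.esymm (n - (k + 1)) * (k + 1) := by
    intro k hk
    rw [coeff_derivative, prod_X_sub_C_coeff m hk]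
  have hlead : q.leadingCoeff = n := by
    rw [leadingCoeff, hq, hcoeff _ (by omega), Nat.sub_add_cancel (by omega), Nat.sub_self,
      pow_zero, esymm_zero_s11, Nat.cast_sub (by omega)]
    push_cast
    ring
  have hvieta := coeff_eq_esymm_roots_of_card hroots (k := n - 1 - l) (by omega)
  rw [hcoeff _ (by omega), hlead, hq, show n - (n - 1 - l + 1) = l by omega,
    show n - 1 - (n - 1 - l) = l by omega,
    show ((n - 1 - l : ℕ) : ℝ) + 1 = (n - l : ℕ) by norm_cast; omega] at hvieta
  have hsign : ((-1 : ℝ) ^ l) ^ 2 = 1 := by rw [← pow_mul, mul_comm, pow_mul]; norm_num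
  linear_combination (-(-1) ^ l) * hvieta - (n * q.roots.esymm l - (n - l : ℕ) * m.esymm l) * hsign

/-- **Newton's inequality** `E_K E_{K+2} ≤ E_{K+1}²` for the normalized elementary symmetric
means `E_l = e_l / (n choose l)` of `n = K + 2 + j` real numbers. -/
theorem esymm_mul_esymm_le_sq (K j : ℕ) {m : Multiset ℝ} (hm : card m = K + 2 + j) :
    m.esymm K * m.esymm (K + 2) * ((K + 2) * (j + 2))
      ≤ m.esymm (K + 1) ^ 2 * ((K + 1) * (j + 1)) := by
  induction j generalizing m with
  | zero =>
    have := esymm_mul_esymm_le_of_card_eq_s11 hm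
    norm_num at this ⊢
    linarith
  | succ j ih =>
    -- Rolle: the roots of the derivative have the same means `E_K, E_{K+1}, E_{K+2}`.
    set m' := (derivative (m.map fun a => X - C a).prod).roots
    have hm' : card m' = K + 2 + j := by rw [card_roots_derivative_prod_X_sub_C, hm]; rfl
    have e (l : ℕ) (hl : l < K + 2 + (j + 1)) :
        ((K + 2 + (j + 1) : ℕ) : ℝ) * m'.esymm l = (K + 2 + (j + 1) - l : ℕ) * m.esymm l := by
      rw [← hm]
      exact card_mul_esymm_roots_derivative m (hm ▸ hl)
    have e0 := e K (by omega)
    have e1 := e (K + 1) (by omega)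
    have e2 := e (K + 2) (by omega)
    rw [show K + 2 + (j + 1) - K = j + 3 by omega] at e0
    rw [show K + 2 + (j + 1) - (K + 1) = j + 2 by omega] at e1
    rw [show K + 2 + (j + 1) - (K + 2) = j + 1 by omega] at e2
    push_cast at e0 e1 e2 ⊢
    have key : ((j + 3) * m.esymm K) * ((j + 1) * m.esymm (K + 2)) * ((K + 2) * (j + 2))
        ≤ ((j + 2) * m.esymm (K + 1)) ^ 2 * ((K + 1) * (j + 1)) := by
      rw [← e0, ← e1, ← e2]
      linear_combination (((K : ℝ) + 2 + (j + 1)) ^ 2) * ih hm'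
    refine le_of_mul_le_mul_right ?_ (by positivity : (0 : ℝ) < (j + 1) * (j + 2))
    linear_combination key

theorem esymm_mul_esymm_lt_sq_of_cons {x : ℝ} {m : Multiset ℝ} {K : ℕ}
    (h1 : 0 < (x ::ₘ m).esymm (K + 1)) (h2 : 0 < (x ::ₘ m).esymm (K + 2)) :
    m.esymm K * m.esymm (K + 2) < m.esymm (K + 1) ^ 2 := by
  have h1' : 0 < m.esymm (K + 1) + x * m.esymm K := by rw [esymm_cons] at h1; exact h1
  have h2' : 0 < m.esymm (K + 2) + x * m.esymm (K + 1) := by rw [esymm_cons] at h2; exact h2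
  by_contra! hge
  -- The constant in Newton's inequality is `< 1`, so it forces `e_K e_{K+2} ≤ 0`.
  have hle : m.esymm K * m.esymm (K + 2) ≤ 0 := by
    rcases lt_or_ge (card m) (K + 2) with hcard | hcard
    · rw [esymm_eq_zero_of_card_lt hcard, mul_zero]
    · obtain ⟨j, hj⟩ := Nat.exists_eq_add_of_le hcard
      refine nonpos_of_mul_nonpos_left (b := (K + j + 3 : ℝ)) ?_ (by positivity)
      linear_combination esymm_mul_esymm_le_sq K j hj
        + mul_le_mul_of_nonneg_right hge (by positivity : (0 : ℝ) ≤ (K + 1) * (j + 1))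
  have he1 : m.esymm (K + 1) = 0 := pow_eq_zero_iff two_ne_zero |>.mp
    (le_antisymm (hge.trans hle) (sq_nonneg _))
  rw [he1, mul_zero, add_zero] at h2'
  rw [he1, zero_add] at h1'
  have hK : m.esymm K = 0 :=
    (mul_eq_zero.mp (le_antisymm hle ((sq_nonneg _).trans hge))).resolve_right h2'.ne'
  simp [hK] at h1'

end Multiset

theorem Finset.prod_one_add_X_mul_C_coeff {R σ : Type*} [CommSemiring R] (s : Finset σ)
    (f : σ → R) (l : ℕ) : (∏ j ∈ s, (1 + X * C (f j))).coeff l = (s.val.map f).esymm l := by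
  rw [← Multiset.prod_one_add_X_mul_C_coeff, Multiset.map_map]
  rfl

section

variable {ι : Type*} [Fintype ι] [DecidableEq ι]

namespace Matrix

theorem det_add_smul_single {R : Type*} [CommRing R] (M : Matrix ι ι R) (i : ι) (c : R) :
    (M + c • single i i 1).det = M.det + c * M.adjugate i i := by
  have h : M + c • single i i 1 = M.updateRow i (M i + c • Pi.single i 1) := by
    ext r s
    by_cases hr : r = i
    · subst hr; simp [single_apply, Pi.single_apply, eq_comm]
    · simp [hr, Ne.symm hr]
  rw [h, det_updateRow_add, det_updateRow_smul, updateRow_eq_self, adjugate_apply]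

theorem det_mul_diagonal_mul {R : Type*} [CommRing R] {P Q : Matrix ι ι R} (h : P * Q = 1)
    (d : ι → R) : (P * diagonal d * Q).det = ∏ j, d j := by
  rw [det_mul, det_mul, det_diagonal, mul_comm P.det, mul_assoc, ← det_mul, h, det_one, mul_one]

theorem one_add_smul_mul_diagonal_mul {R : Type*} [CommRing R] {P Q : Matrix ι ι R}
    (h : P * Q = 1) (x : R) (d : ι → R) :
    1 + x • (P * diagonal d * Q) = P * diagonal (fun j => 1 + x * d j) * Q := by
  have hd : diagonal (fun j => 1 + x * d j) = 1 + x • diagonal d := by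
    rw [← diagonal_one, ← diagonal_smul, diagonal_add]
    rfl
  rw [hd, mul_add, add_mul, mul_one, h, Matrix.mul_smul, Matrix.smul_mul]

theorem adjugate_mul_diagonal_mul_apply {R : Type*} [CommRing R] {P Q : Matrix ι ι R}
    (h : P * Q = 1) (d : ι → R) (i i' : ι) :
    (P * diagonal d * Q).adjugate i i' = ∑ j, P i j * Q j i' * ∏ m ∈ univ.erase j, d m := by
  have hadj (A B : Matrix ι ι R) (hAB : A * B = 1) : A.adjugate = A.det • B := by
    rw [← mul_one A.adjugate, ← hAB, ← mul_assoc, adjugate_mul, smul_mul, one_mul]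
  have hQP : Q * P = 1 := mul_eq_one_comm.mp h
  have hdet : P.det * Q.det = 1 := by rw [← det_mul, h, det_one]
  rw [adjugate_mul_distrib, adjugate_mul_distrib, hadj Q P hQP, hadj P Q h, adjugate_diagonal]
  simp only [Matrix.smul_mul, Matrix.mul_smul, smul_smul, hdet, one_smul]
  rw [← mul_assoc, mul_apply]
  exact sum_congr rfl fun j _ => by rw [mul_diagonal, mul_right_comm]

end Matrix

theorem mS_eq_coeff_det (B : Matrix ι ι ℝ) (l : ℕ) :
    mS l B = (1 + (X : ℝ[X]) • B.map C).det.coeff l :=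
  (coeff_det_one_add_X_smul_eq_sum_minors B l).symm

theorem mS_zero (B : Matrix ι ι ℝ) : mS 0 B = 1 := by
  simp [mS]

theorem mS_add_smul_single (B : Matrix ι ι ℝ) (i : ι) (s : ℝ) (l : ℕ) :
    mS l (B + s • single i i 1)
      = mS l B + s * (X * (1 + (X : ℝ[X]) • B.map C).adjugate i i).coeff l := by
  have h : 1 + (X : ℝ[X]) • (B + s • single i i 1).map C
      = 1 + (X : ℝ[X]) • B.map C + (C s * X) • single i i 1 := by
    ext r c : 1
    simp only [Matrix.add_apply, Matrix.smul_apply, map_apply, single_apply, smul_eq_mul]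
    split_ifs <;> simp; ring
  rw [mS_eq_coeff_det, mS_eq_coeff_det, h, det_add_smul_single, coeff_add, mul_assoc,
    coeff_C_mul]

theorem pdmQ_diag_eq (B : Matrix ι ι ℝ) (i : ι) (k : ℕ) (hk : mS k B ≠ 0) :
    pdmQ k i i B = ((X * (1 + (X : ℝ[X]) • B.map C).adjugate i i).coeff (k + 1) * mS k B
      - mS (k + 1) B * (X * (1 + (X : ℝ[X]) • B.map C).adjugate i i).coeff k) / mS k B ^ 2 := by
  set p := X * (1 + (X : ℝ[X]) • B.map C).adjugate i i
  have hline (l : ℕ) : HasDerivAt (fun s : ℝ => mS l (B + s • single i i 1)) (p.coeff l) 0 := by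
    simp_rw [mS_add_smul_single]
    simpa using ((hasDerivAt_id (0 : ℝ)).mul_const (p.coeff l)).const_add (mS l B)
  have := (hline (k + 1)).div (hline k) (by simpa using hk)
  simp only [zero_smul, add_zero] at this
  exact this.deriv

namespace Matrix.IsHermitian

variable {A : Matrix ι ι ℝ} (hA : A.IsHermitian)

theorem map_C_eigenvectorUnitary_mul_star :
    (hA.eigenvectorUnitary : Matrix ι ι ℝ).map C
      * (star (hA.eigenvectorUnitary : Matrix ι ι ℝ)).map (C : ℝ →+* ℝ[X]) = 1 := by
  rw [← Matrix.map_mul, mem_unitaryGroup_iff.mp hA.eigenvectorUnitary.2,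
    Matrix.map_one _ (map_zero C) (map_one C)]

theorem one_add_X_smul_map_C_eq :
    1 + (X : ℝ[X]) • A.map C
      = (hA.eigenvectorUnitary : Matrix ι ι ℝ).map C
        * diagonal (fun j => 1 + X * C (hA.eigenvalues j))
        * (star (hA.eigenvectorUnitary : Matrix ι ι ℝ)).map C := by
  have hspec : A = (hA.eigenvectorUnitary : Matrix ι ι ℝ) * diagonal hA.eigenvalues
      * star (hA.eigenvectorUnitary : Matrix ι ι ℝ) := by
    simpa using hA.spectral_theorem
  conv_lhs => rw [hspec, Matrix.map_mul, Matrix.map_mul, diagonal_map (map_zero C)]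
  rw [one_add_smul_mul_diagonal_mul hA.map_C_eigenvectorUnitary_mul_star]

theorem mS_eq_esymm (l : ℕ) : mS l A = (univ.val.map hA.eigenvalues).esymm l := by
  rw [mS_eq_coeff_det, hA.one_add_X_smul_map_C_eq,
    det_mul_diagonal_mul hA.map_C_eigenvectorUnitary_mul_star, Finset.prod_one_add_X_mul_C_coeff]

theorem coeff_X_mul_adjugate_succ (i : ι) (l : ℕ) :
    (X * (1 + (X : ℝ[X]) • A.map C).adjugate i i).coeff (l + 1)
      = ∑ j, (hA.eigenvectorUnitary : Matrix ι ι ℝ) i j ^ 2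
          * ((univ.erase j).val.map hA.eigenvalues).esymm l := by
  rw [coeff_X_mul, hA.one_add_X_smul_map_C_eq,
    adjugate_mul_diagonal_mul_apply hA.map_C_eigenvectorUnitary_mul_star, finsetSum_coeff]
  refine sum_congr rfl fun j _ => ?_
  rw [map_apply, map_apply, star_apply, star_trivial, ← C_mul, coeff_C_mul,
    Finset.prod_one_add_X_mul_C_coeff, sq]

theorem sum_sq_eigenvectorUnitary_apply (i : ι) :
    ∑ j, (hA.eigenvectorUnitary : Matrix ι ι ℝ) i j ^ 2 = 1 := by
  have h := congrFun (congrFun (mem_unitaryGroup_iff.mp hA.eigenvectorUnitary.2) i) i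
  simpa [mul_apply, sq] using h

end Matrix.IsHermitian

theorem Matrix.IsHermitian.pdmQ_pos {A : Matrix ι ι ℝ} (hA : A.IsHermitian) {k : ℕ}
    (hk : 0 < mS k A) (hk1 : 0 < mS (k + 1) A) (i : ι) : 0 < pdmQ k i i A := by
  rw [pdmQ_diag_eq A i k hk.ne']
  refine div_pos ?_ (pow_pos hk 2)
  have hw := hA.sum_sq_eigenvectorUnitary_apply i
  obtain ⟨j₀, -, hj₀⟩ := exists_ne_zero_of_sum_ne_zero (hw.trans_ne one_ne_zero)
  cases k with
  | zero =>
    simp only [coeff_X_mul_zero, hA.coeff_X_mul_adjugate_succ, mS_zero, Multiset.esymm_zero_s11,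
      mul_one, mul_zero, sub_zero, hw, one_pos]
  | succ K =>
    rw [hA.coeff_X_mul_adjugate_succ, hA.coeff_X_mul_adjugate_succ, sum_mul, mul_sum,
      ← sum_sub_distrib]
    have hterm (j : ι) : 0 < ((univ.erase j).val.map hA.eigenvalues).esymm (K + 1) * mS (K + 1) A
        - mS (K + 2) A * ((univ.erase j).val.map hA.eigenvalues).esymm K := by
      have hcons : univ.val.map hA.eigenvalues
          = hA.eigenvalues j ::ₘ (univ.erase j).val.map hA.eigenvalues := by
        rw [Finset.erase_val, ← Multiset.map_cons, Multiset.cons_erase (mem_univ_val j)]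
      rw [hA.mS_eq_esymm, hcons] at hk hk1 ⊢
      rw [hA.mS_eq_esymm, hcons, Multiset.esymm_cons, Multiset.esymm_cons]
      linarith [Multiset.esymm_mul_esymm_lt_sq_of_cons hk hk1]
    simp only [mul_assoc, ← mul_sub, mul_left_comm (mS (K + 2) A)]
    refine sum_pos' (fun j _ => ?_) ⟨j₀, mem_univ _, ?_⟩
    · exact mul_nonneg (sq_nonneg _) (hterm j).le
    · exact mul_pos ((sq_nonneg _).lt_of_ne' hj₀) (hterm j₀)

end

theorem pdmQ_diag_pos_general (N k : ℕ)
    (A : Matrix (Fin (N + 2)) (Fin (N + 2)) ℝ)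
    (hsymm : A.IsSymm)
    (hpos : ∀ l : ℕ, 1 ≤ l → l ≤ k + 1 → 0 < mS l A) :
    ∀ i : Fin (N + 2), i ≠ 0 → 0 < pdmQ k i i A := by
  intro i _
  have hk : 0 < mS k A := by
    rcases Nat.eq_zero_or_pos k with rfl | hk
    · rw [mS_zero]
      exact one_pos
    · exact hpos k hk k.le_succ
  exact (isHermitian_iff_isSymm.mpr hsymm).pdmQ_pos hk (hpos (k + 1) k.succ_pos le_rfl) i

/-- Let `A` be an `n×n` (`n = N+2 ≥ 2`) real symmetric arrowhead matrix with `0 ≤ k ≤ n−1`,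
`A_{11} < 0` and `S_l(A) > 0` for `l = 1,…,k+1`. Then `(∂Q_k/∂A_{ii})(A) > 0` for every
index `i ≠ 0` (i.e. `2 ≤ i` in 1-based notation). -/
theorem pdmQ_diag_pos (N k : ℕ) (hk : k + 1 ≤ N + 2)
    (A : Matrix (Fin (N + 2)) (Fin (N + 2)) ℝ)
    (hsymm : A.IsSymm)
    (harrow : ∀ i j : Fin (N + 2), i ≠ 0 → j ≠ 0 → i ≠ j → A i j = 0)
    (h11 : A 0 0 < 0)
    (hpos : ∀ l : ℕ, 1 ≤ l → l ≤ k + 1 → 0 < mS l A) :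
    ∀ i : Fin (N + 2), i ≠ 0 → 0 < pdmQ k i i A :=
  pdmQ_diag_pos_general N k A hsymm hpos
end
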